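/- For all integers 1 ≤ k ≤ d, one has n(k,d) ≥ d^k / k^k. -/

import Mathlib

/-!
Put `m = ⌊d/k⌋` and cut the first `k m` coordinates into `k` blocks of length `m`, filling the
remaining coordinates with `∗`. On a block, the `m + 1` staircase words `1^a 0 ∗^(m-a-1)` clash
pairwise in exactly one position (the smaller of the two `0`s). Distances add under
concatenation, so choosing one staircase word per block gives `(m + 1)^k ≥ (d/k)^k` words, any two
of which are at distance between `1` and `k`: one clash for each block where they differ.
-/

/-- The three-letter alphabet `S = {0, 1, ∗}`. -/
inductive Tern | zero | one | star
deriving DecidableEq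

instance instFintypeTern : Fintype Tern :=
  ⟨{Tern.zero, Tern.one, Tern.star}, fun x => by cases x <;> simp⟩

/-- `clash x y` is true iff both `x, y ∈ {0,1}` and `x ≠ y`. -/
def clash : Tern → Tern → Bool
  | Tern.zero, Tern.one => true
  | Tern.one, Tern.zero => true
  | _, _ => false

/-- `dist u v`: the number of positions where both letters are binary and they differ. -/
def dist {d : ℕ} (u v : Fin d → Tern) : ℕ :=
  (Finset.univ.filter (fun i => clash (u i) (v i))).card

/-- A `k`-neighborly code in `S^d`: every two distinct members `u, v`
satisfy `1 ≤ dist(u,v) ≤ k`. -/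
def IsNeighborlyCode (k d : ℕ) (V : Finset (Fin d → Tern)) : Prop :=
  ∀ u ∈ V, ∀ v ∈ V, u ≠ v → 1 ≤ dist u v ∧ dist u v ≤ k

/-- `n(k,d)`: the maximum size of a `k`-neighborly code in `S^d`. -/
noncomputable def nMax (k d : ℕ) : ℕ :=
  sSup {m : ℕ | ∃ V : Finset (Fin d → Tern), IsNeighborlyCode k d V ∧ V.card = m}

def HasNeighborlyCode (k d N : ℕ) : Prop :=
  ∃ V : Finset (Fin d → Tern), IsNeighborlyCode k d V ∧ V.card = N

namespace Tern

lemma clash_self (x : Tern) : clash x x = false := by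
  cases x <;> rfl

lemma dist_self {d : ℕ} (u : Fin d → Tern) : dist u u = 0 := by
  simp [_root_.dist, clash_self]

lemma dist_append {d₁ d₂ : ℕ} (u₁ v₁ : Fin d₁ → Tern) (u₂ v₂ : Fin d₂ → Tern) :
    dist (Fin.append u₁ u₂) (Fin.append v₁ v₂) = dist u₁ v₁ + dist u₂ v₂ := by
  simp only [_root_.dist, Finset.card_filter, Fin.sum_univ_add, Fin.append_left,
    Fin.append_right]

def stair {m : ℕ} (a : Fin (m + 1)) (i : Fin m) : Tern :=
  if (i : ℕ) < a then one else if (i : ℕ) = a then zero else star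

lemma clash_stair_iff {m : ℕ} (a b : Fin (m + 1)) (i : Fin m) :
    clash (stair a i) (stair b i) = true ↔ a ≠ b ∧ (i : ℕ) = min (a : ℕ) b := by
  rw [Ne, Fin.ext_iff]
  unfold stair
  split_ifs <;> simp [clash] <;> omega

lemma dist_stair {m : ℕ} {a b : Fin (m + 1)} (hab : a ≠ b) : dist (stair a) (stair b) = 1 := by
  have hmin : min (a : ℕ) b < m := by
    have := Fin.val_ne_of_ne hab
    omega
  rw [_root_.dist, Finset.card_eq_one]
  refine ⟨⟨min (a : ℕ) b, hmin⟩, ?_⟩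
  ext i
  simp [clash_stair_iff, hab, Fin.ext_iff]

end Tern

lemma IsNeighborlyCode.dist_le {k d : ℕ} {V : Finset (Fin d → Tern)}
    (hV : IsNeighborlyCode k d V) {u v : Fin d → Tern} (hu : u ∈ V) (hv : v ∈ V) :
    dist u v ≤ k := by
  rcases eq_or_ne u v with rfl | huv
  · simp [Tern.dist_self]
  · exact (hV u hu v hv huv).2

namespace HasNeighborlyCode

lemma of_dist {α : Type*} [Fintype α] {k d : ℕ} (f : α → Fin d → Tern)
    (hf : ∀ a b, a ≠ b → 1 ≤ dist (f a) (f b) ∧ dist (f a) (f b) ≤ k) :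
    HasNeighborlyCode k d (Fintype.card α) := by
  classical
  have hinj : Function.Injective f := fun a b hab => by
    by_contra hne
    simpa [hab, Tern.dist_self] using (hf a b hne).1
  refine ⟨Finset.univ.image f, fun _ hu _ hv huv => ?_, ?_⟩
  · obtain ⟨a, -, rfl⟩ := Finset.mem_image.mp hu
    obtain ⟨b, -, rfl⟩ := Finset.mem_image.mp hv
    exact hf a b (ne_of_apply_ne f huv)
  · rw [Finset.card_image_of_injective _ hinj, Finset.card_univ]

lemma one (k d : ℕ) : HasNeighborlyCode k d 1 :=
  of_dist (α := Unit) (fun _ _ => Tern.star) fun a b hab => absurd (Subsingleton.elim a b) hab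

lemma staircase (m : ℕ) : HasNeighborlyCode 1 m (m + 1) := by
  simpa using of_dist Tern.stair fun a b hab => by simp [Tern.dist_stair hab]

lemma append {k₁ k₂ d₁ d₂ N₁ N₂ : ℕ} (h₁ : HasNeighborlyCode k₁ d₁ N₁)
    (h₂ : HasNeighborlyCode k₂ d₂ N₂) :
    HasNeighborlyCode (k₁ + k₂) (d₁ + d₂) (N₁ * N₂) := by
  obtain ⟨V₁, hV₁, rfl⟩ := h₁
  obtain ⟨V₂, hV₂, rfl⟩ := h₂
  simpa using of_dist (α := V₁ × V₂) (fun p => Fin.append p.1.1 p.2.1) fun p q hpq => by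
    rw [Tern.dist_append]
    have hle₁ := hV₁.dist_le p.1.2 q.1.2
    have hle₂ := hV₂.dist_le p.2.2 q.2.2
    refine ⟨?_, by omega⟩
    rcases not_and_or.mp (Prod.ext_iff.not.mp hpq) with hne | hne
    · have := (hV₁ _ p.1.2 _ q.1.2 (Subtype.coe_injective.ne hne)).1
      omega
    · have := (hV₂ _ p.2.2 _ q.2.2 (Subtype.coe_injective.ne hne)).1
      omega

lemma mono_dim {k d d' N : ℕ} (h : HasNeighborlyCode k d N) (hdd' : d ≤ d') :
    HasNeighborlyCode k d' N := by
  simpa [Nat.add_sub_cancel' hdd'] using h.append (one 0 (d' - d))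

lemma pow (k m : ℕ) : HasNeighborlyCode k (k * m) ((m + 1) ^ k) := by
  induction k with
  | zero => simpa using one 0 0
  | succ k ih =>
    rw [Nat.succ_mul, pow_succ]
    exact ih.append (staircase m)

lemma le_nMax {k d N : ℕ} (h : HasNeighborlyCode k d N) : N ≤ nMax k d :=
  le_csSup ⟨Fintype.card (Fin d → Tern), by rintro _ ⟨V, -, rfl⟩; exact V.card_le_univ⟩ h

end HasNeighborlyCode

lemma natCast_div_le_div_add_one {K : Type*} [Semifield K] [LinearOrder K] [IsStrictOrderedRing K]
    [FloorSemiring K] (d k : ℕ) : (d : K) / k ≤ ((d / k : ℕ) : K) + 1 := by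
  rw [← Nat.floor_div_eq_div (K := K)]
  exact (Nat.lt_floor_add_one _).le

theorem n_lower_bound_general (k d : ℕ) :
    (d : ℝ) ^ k / (k : ℝ) ^ k ≤ (nMax k d : ℝ) := by
  have hcode : (d / k + 1) ^ k ≤ nMax k d :=
    ((HasNeighborlyCode.pow k (d / k)).mono_dim (Nat.mul_div_le d k)).le_nMax
  calc (d : ℝ) ^ k / (k : ℝ) ^ k = ((d : ℝ) / k) ^ k := (div_pow _ _ _).symm
    _ ≤ (((d / k : ℕ) : ℝ) + 1) ^ k :=
      pow_le_pow_left₀ (by positivity) (natCast_div_le_div_add_one d k) k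
    _ ≤ nMax k d := by exact_mod_cast hcode

/-- Alon's lower bound: for `1 ≤ k ≤ d`, `n(k,d) ≥ d^k / k^k`. -/
theorem n_lower_bound (k d : ℕ) (hk : 1 ≤ k) (hkd : k ≤ d) :
    (d : ℝ) ^ k / (k : ℝ) ^ k ≤ (nMax k d : ℝ) :=
  n_lower_bound_general k d
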